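/- Let z = x + iy be a complex number with x ≠ 0 or y² ≤ 1, let ρ₁ = |z−i|, ρ₂ = |z+i|, a = (ρ₁+ρ₂)/2, b = (ρ₂−ρ₁)/2. Then the complex number Z(z) = a·√(1−b²) + i·sign(x)·b·√(a²−1) satisfies Z(z)² = 1 + z². -/

import Mathlib

open Complex

/-- `a(w) = (|w-i| + |w+i|)/2`. -/
noncomputable def aF (w : ℂ) : ℝ :=
  (‖w - Complex.I‖ + ‖w + Complex.I‖) / 2

/-- `b(w) = (|w+i| - |w-i|)/2`. -/
noncomputable def bF (w : ℂ) : ℝ :=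
  (‖w + Complex.I‖ - ‖w - Complex.I‖) / 2

/-- Principal branch `Z(w)` of `√(1+w²)` on the cut plane `ℂ ∖ ((-i∞,-i) ∪ (i,i∞))`. -/
noncomputable def Z (w : ℂ) : ℂ :=
  (aF w * Real.sqrt (1 - (bF w) ^ 2) : ℝ) +
    Complex.I * (Real.sign w.re : ℝ) * (bF w * Real.sqrt ((aF w) ^ 2 - 1) : ℝ)

/-! With `ρ₁ = |z - i|`, `ρ₂ = |z + i|` one has `ρ₂² - ρ₁² = 4y` and `ρ₁² + ρ₂² = 2(x² + y² + 1)`,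
hence `ab = y` and `a² + b² = x² + y² + 1`, so that `(1 - b²)(a² - 1) = x²`. The imaginary part of
`Z²` is therefore `2 sign(x) · ab · |x| = 2xy`, and for `x ≠ 0` its real part is
`a²(1 - b²) - b²(a² - 1) = a² + b² - 2(ab)² = 1 + x² - y²`. On the imaginary axis `sign 0 = 0`,
and `|y| ≤ 1` forces `a = 1`, so the real part is `1 - b² = 1 - y²`. -/

lemma Real.sign_mul_abs (x : ℝ) : Real.sign x * |x| = x := by
  rcases lt_trichotomy x 0 with hx | rfl | hx
  · rw [Real.sign_of_neg hx, abs_of_neg hx]; ring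
  · simp
  · rw [Real.sign_of_pos hx, abs_of_pos hx]; ring

lemma Real.sign_sq_of_ne_zero {x : ℝ} (hx : x ≠ 0) : Real.sign x ^ 2 = 1 := by
  rcases Real.sign_apply_eq_of_ne_zero x hx with h | h <;> rw [h] <;> norm_num

lemma sq_norm_sub_I (w : ℂ) : ‖w - I‖ ^ 2 = w.re ^ 2 + (w.im - 1) ^ 2 := by
  rw [Complex.sq_norm, normSq_apply, sub_re, sub_im, I_re, I_im]; ring

lemma sq_norm_add_I (w : ℂ) : ‖w + I‖ ^ 2 = w.re ^ 2 + (w.im + 1) ^ 2 := by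
  rw [Complex.sq_norm, normSq_apply, add_re, add_im, I_re, I_im]; ring

lemma norm_add_I_sub_sub_I (w : ℂ) : ‖(w + I) - (w - I)‖ = 2 := by
  rw [show (w + I) - (w - I) = 2 * I by ring, norm_mul, norm_I, Complex.norm_two, mul_one]

lemma one_le_aF (w : ℂ) : 1 ≤ aF w := by
  have := norm_sub_le (w + I) (w - I)
  rw [norm_add_I_sub_sub_I] at this
  unfold aF; linarith

lemma one_le_sq_aF (w : ℂ) : 1 ≤ aF w ^ 2 :=
  one_le_pow₀ (one_le_aF w)

lemma sq_bF_le_one (w : ℂ) : bF w ^ 2 ≤ 1 := by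
  have := abs_norm_sub_norm_le (w + I) (w - I)
  rw [norm_add_I_sub_sub_I] at this
  rw [sq_le_one_iff_abs_le_one, bF, abs_div, abs_two]
  linarith

lemma aF_mul_bF (w : ℂ) : aF w * bF w = w.im := by
  have h₁ := sq_norm_sub_I w
  have h₂ := sq_norm_add_I w
  unfold aF bF; linear_combination (h₂ - h₁) / 4

lemma sq_aF_add_sq_bF (w : ℂ) : aF w ^ 2 + bF w ^ 2 = w.re ^ 2 + w.im ^ 2 + 1 := by
  have h₁ := sq_norm_sub_I w
  have h₂ := sq_norm_add_I w
  unfold aF bF; linear_combination (h₁ + h₂) / 2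

lemma one_sub_sq_bF_mul_sq_aF_sub_one (w : ℂ) :
    (1 - bF w ^ 2) * (aF w ^ 2 - 1) = w.re ^ 2 := by
  linear_combination sq_aF_add_sq_bF w - (aF w * bF w + w.im) * aF_mul_bF w

lemma sqrt_one_sub_sq_bF_mul_sqrt_sq_aF_sub_one (w : ℂ) :
    √(1 - bF w ^ 2) * √(aF w ^ 2 - 1) = |w.re| := by
  rw [← Real.sqrt_mul (sub_nonneg.mpr (sq_bF_le_one w)), one_sub_sq_bF_mul_sq_aF_sub_one,
    Real.sqrt_sq_eq_abs]

lemma sq_aF_of_re_eq_zero {w : ℂ} (hre : w.re = 0) (him : w.im ^ 2 ≤ 1) : aF w ^ 2 = 1 := by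
  have hx := one_sub_sq_bF_mul_sq_aF_sub_one w
  rw [hre, sq_eq_zero_iff.mpr rfl, mul_eq_zero] at hx
  rcases hx with hb | ha
  · have := sq_aF_add_sq_bF w
    rw [hre] at this
    linarith [one_le_sq_aF w]
  · linarith

lemma Z_re (w : ℂ) : (Z w).re = aF w * √(1 - bF w ^ 2) := by
  simp [Z]

lemma Z_im (w : ℂ) : (Z w).im = Real.sign w.re * (bF w * √(aF w ^ 2 - 1)) := by
  simp [Z]

lemma Z_sq_re (w : ℂ) :
    (Z w ^ 2).re = aF w ^ 2 * (1 - bF w ^ 2) - Real.sign w.re ^ 2 * (bF w ^ 2 * (aF w ^ 2 - 1)) := by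
  rw [pow_two, mul_re, Z_re, Z_im]
  linear_combination aF w ^ 2 * Real.sq_sqrt (sub_nonneg.mpr (sq_bF_le_one w)) -
    Real.sign w.re ^ 2 * bF w ^ 2 * Real.sq_sqrt (sub_nonneg.mpr (one_le_sq_aF w))

lemma Z_sq_re_of_re_ne_zero {w : ℂ} (hre : w.re ≠ 0) : (Z w ^ 2).re = (1 + w ^ 2).re := by
  rw [Z_sq_re, Real.sign_sq_of_ne_zero hre, add_re, one_re, pow_two w, mul_re]
  linear_combination sq_aF_add_sq_bF w - 2 * (aF w * bF w + w.im) * aF_mul_bF w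

lemma Z_sq_re_of_re_eq_zero {w : ℂ} (hre : w.re = 0) (him : w.im ^ 2 ≤ 1) :
    (Z w ^ 2).re = (1 + w ^ 2).re := by
  rw [Z_sq_re, hre, Real.sign_zero, add_re, one_re, pow_two w, mul_re, hre]
  linear_combination sq_aF_of_re_eq_zero hre him - (aF w * bF w + w.im) * aF_mul_bF w

lemma Z_sq_im (w : ℂ) : (Z w ^ 2).im = (1 + w ^ 2).im := by
  rw [pow_two, mul_im, Z_re, Z_im, add_im, one_im, pow_two w, mul_im]
  calc aF w * √(1 - bF w ^ 2) * (Real.sign w.re * (bF w * √(aF w ^ 2 - 1))) +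
        Real.sign w.re * (bF w * √(aF w ^ 2 - 1)) * (aF w * √(1 - bF w ^ 2))
      = 2 * (Real.sign w.re * (√(1 - bF w ^ 2) * √(aF w ^ 2 - 1))) * (aF w * bF w) := by ring
    _ = 0 + (w.re * w.im + w.im * w.re) := by
      rw [sqrt_one_sub_sq_bF_mul_sqrt_sq_aF_sub_one, Real.sign_mul_abs, aF_mul_bF]; ring

theorem stmt13 (z : ℂ) (h : z.re ≠ 0 ∨ z.im ^ 2 ≤ 1) : (Z z) ^ 2 = 1 + z ^ 2 := by
  refine Complex.ext ?_ (Z_sq_im z)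
  by_cases hre : z.re = 0
  · exact Z_sq_re_of_re_eq_zero hre (h.resolve_left (not_not.mpr hre))
  · exact Z_sq_re_of_re_ne_zero hre
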